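/- arXiv:math/9907119 — 2 statements merged into one kernel-verified Lean document; each statement's English description precedes it below -/
import Mathlib

section
/- The Cartesian product K_m □ K_n of two complete graphs is circulant if and only if gcd(m,n) = 1 or m = n = 2. -/
open SimpleGraph

/-- A graph is circulant iff its automorphism group contains a transitive cyclic subgroup,
i.e. some automorphism whose iterates act transitively on the vertices. -/
def SimpleGraph.IsCirculant {V : Type*} (G : SimpleGraph V) : Prop :=
  ∃ φ : G ≃g G, ∀ v w : V, ∃ k : ℕ, (φ.toEquiv ^ k) v = w

/-- The tensor (categorical/Kronecker) product of simple graphs. -/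
def SimpleGraph.tensor {α β : Type*} (G : SimpleGraph α) (H : SimpleGraph β) :
    SimpleGraph (α × β) where
  Adj x y := G.Adj x.1 y.1 ∧ H.Adj x.2 y.2
  symm.symm _ _ h := ⟨G.symm.symm _ _ h.1, H.symm.symm _ _ h.2⟩
  loopless.irrefl x h := G.loopless.irrefl x.1 h.1

/-!
An automorphism of `K_m □ K_n` either keeps the direction (row or column) of every edge or flips
every one: two distinct neighbours of a vertex are adjacent iff they lie in the same direction from
it, so keeping is decided alike at all edges through a vertex, hence everywhere. Thus it is
`(a, b) ↦ (σ a, τ b)` or `(a, b) ↦ (c b, s a)`.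

In the first case the orbit of `(a, b)` has length `lcm p q`, where `p ≤ m` and `q ≤ n` are the
periods of `a` under `σ` and of `b` under `τ`; transitivity makes it `m * n`, forcing
`gcd m n = 1`. In the second case the union of the graphs of `s` and `c` is invariant, so it is
all of the `m * n` vertices, whence `m * n ≤ m + n`. Conversely `(a, b) ↦ (a + 1, b + 1)` is
transitive for coprime `m, n` by the same period count, and `(a, b) ↦ (b, a + 1)` rotates the
4-cycle `K_2 □ K_2`.
-/

open Function

namespace Function

variable {α β : Type*} [Fintype α] [Fintype β]

theorem minimalPeriod_eq_card_iff {f : α → α} (hf : Injective f) (x : α) :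
    minimalPeriod f x = Fintype.card α ↔ ∀ y, ∃ k, f^[k] x = y := by
  have hpos := minimalPeriod_pos_of_mem_periodicPts (hf.mem_periodicPts x)
  constructor
  · intro h y
    have hinj : Injective fun i : Fin (minimalPeriod f x) => f^[i] x :=
      fun i j hij => Fin.ext (iterate_injOn_Iio_minimalPeriod i.2 j.2 hij)
    obtain ⟨i, hi⟩ := ((Fintype.bijective_iff_injective_and_card _).2 ⟨hinj, by simp [h]⟩).2 y
    exact ⟨i, hi⟩
  · intro h
    refine le_antisymm minimalPeriod_le_card ?_
    have hsurj : Surjective fun i : Fin (minimalPeriod f x) => f^[i] x := fun y ↦ by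
      obtain ⟨k, rfl⟩ := h y
      exact ⟨⟨k % minimalPeriod f x, Nat.mod_lt _ hpos⟩, iterate_mod_minimalPeriod_eq⟩
    simpa using Fintype.card_le_of_surjective _ hsurj

theorem minimalPeriod_prodMap_eq_card_iff (f : α → α) (g : β → β) (x : α × β) :
    minimalPeriod (Prod.map f g) x = Fintype.card (α × β) ↔
      minimalPeriod f x.1 = Fintype.card α ∧ minimalPeriod g x.2 = Fintype.card β ∧
        Nat.Coprime (Fintype.card α) (Fintype.card β) := by
  have hα : 0 < Fintype.card α := Fintype.card_pos_iff.2 ⟨x.1⟩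
  have hβ : 0 < Fintype.card β := Fintype.card_pos_iff.2 ⟨x.2⟩
  have hp : minimalPeriod f x.1 ≤ Fintype.card α := minimalPeriod_le_card
  have hq : minimalPeriod g x.2 ≤ Fintype.card β := minimalPeriod_le_card
  rw [minimalPeriod_prodMap, Fintype.card_prod]
  constructor
  · intro h
    have hp0 : 0 < minimalPeriod f x.1 := Nat.pos_of_ne_zero fun h0 ↦ by
      simp [h0] at h; omega
    have hq0 : 0 < minimalPeriod g x.2 := Nat.pos_of_ne_zero fun h0 ↦ by
      simp [h0] at h; omega
    have hle := h ▸ Nat.lcm_le_mul hp0 hq0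
    have hpα : minimalPeriod f x.1 = Fintype.card α := by nlinarith
    have hqβ : minimalPeriod g x.2 = Fintype.card β := by nlinarith
    rw [hpα, hqβ, Nat.lcm_eq_mul_iff] at h
    exact ⟨hpα, hqβ, by omega⟩
  · rintro ⟨hp, hq, hcop⟩
    rw [hp, hq, hcop.lcm_eq_mul]

open Fin.NatCast in
theorem _root_.Fin.minimalPeriod_add_one (m : ℕ) [NeZero m] (x : Fin m) :
    minimalPeriod (· + 1) x = m := by
  refine ((minimalPeriod_eq_card_iff (add_left_injective 1) x).2 fun y ↦ ?_).trans
    (Fintype.card_fin m)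
  exact ⟨(y - x).val, by
    rw [add_right_iterate_apply, nsmul_one, Fin.cast_val_eq_self, add_sub_cancel]⟩

end Function

namespace SimpleGraph

variable {α β α' β' : Type*}

def Iso.boxProd {G : SimpleGraph α} {G' : SimpleGraph α'} {H : SimpleGraph β}
    {H' : SimpleGraph β'} (e₁ : G ≃g G') (e₂ : H ≃g H') : G.boxProd H ≃g G'.boxProd H' where
  toEquiv := e₁.toEquiv.prodCongr e₂.toEquiv
  map_rel_iff' := by simp [boxProd_adj, Iso.map_adj_iff]

theorem isCirculant_iff_exists_iterate {V : Type*} {G : SimpleGraph V} :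
    G.IsCirculant ↔ ∃ φ : G ≃g G, ∀ v w, ∃ k, (⇑φ)^[k] v = w := by
  simp [IsCirculant, Equiv.Perm.coe_pow]

abbrev rookGraph (α β : Type*) : SimpleGraph (α × β) := completeGraph α □ completeGraph β

theorem rookGraph_adj {u v : α × β} :
    (rookGraph α β).Adj u v ↔ u ≠ v ∧ (u.1 = v.1 ∨ u.2 = v.2) := by
  rw [boxProd_adj, Ne, Prod.ext_iff]
  simp only [completeGraph_eq_top, top_adj]
  tauto

theorem rookGraph_adj_iff_of_adj_of_adj {u v w : α × β} (huv : (rookGraph α β).Adj u v)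
    (huw : (rookGraph α β).Adj u w) (hvw : v ≠ w) :
    (rookGraph α β).Adj v w ↔ (u.1 = v.1 ↔ u.1 = w.1) := by
  rw [rookGraph_adj, Ne, Prod.ext_iff] at *
  grind

namespace Iso

variable (φ : rookGraph α β ≃g rookGraph α β)

theorem rookGraph_fst_eq_iff_congr {u v w : α × β} (huv : (rookGraph α β).Adj u v)
    (huw : (rookGraph α β).Adj u w) :
    (u.1 = v.1 ↔ (φ u).1 = (φ v).1) ↔ (u.1 = w.1 ↔ (φ u).1 = (φ w).1) := by
  rcases eq_or_ne v w with rfl | hvw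
  · rfl
  have h := rookGraph_adj_iff_of_adj_of_adj huv huw hvw
  have h' := rookGraph_adj_iff_of_adj_of_adj (φ.map_adj_iff.2 huv) (φ.map_adj_iff.2 huw)
    (φ.injective.ne hvw)
  rw [φ.map_adj_iff] at h'
  tauto

theorem rookGraph_lines_preserved_or_swapped :
    ((∀ u v : α × β, u.1 = v.1 → (φ u).1 = (φ v).1) ∧
        ∀ u v : α × β, u.2 = v.2 → (φ u).2 = (φ v).2) ∨
      ((∀ u v : α × β, u.1 = v.1 → (φ u).2 = (φ v).2) ∧
        ∀ u v : α × β, u.2 = v.2 → (φ u).1 = (φ v).1) := by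
  set Q : α × β → Prop := fun u ↦ ∀ v, (rookGraph α β).Adj u v → (u.1 = v.1 ↔ (φ u).1 = (φ v).1)
  have hQ_iff {u v} (huv : (rookGraph α β).Adj u v) : Q u ↔ (u.1 = v.1 ↔ (φ u).1 = (φ v).1) :=
    ⟨fun h ↦ h v huv, fun h w huw ↦ (rookGraph_fst_eq_iff_congr φ huv huw).1 h⟩
  have hQ_line {u v} (h : u.1 = v.1 ∨ u.2 = v.2) : Q u ↔ Q v := by
    obtain rfl | hne := eq_or_ne u v
    · rfl
    have huv : (rookGraph α β).Adj u v := rookGraph_adj.2 ⟨hne, h⟩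
    rw [hQ_iff huv, hQ_iff huv.symm, eq_comm, @eq_comm _ (φ v).1]
  have hQ_const (u v : α × β) : Q u ↔ Q v :=
    (hQ_line (u := u) (v := (u.1, v.2)) (.inl rfl)).trans (hQ_line (.inr rfl))
  have himage {u v : α × β} (hne : u ≠ v) (h : u.1 = v.1 ∨ u.2 = v.2) :
      (φ u).1 = (φ v).1 ∨ (φ u).2 = (φ v).2 :=
    (rookGraph_adj.1 (φ.map_adj_iff.2 (rookGraph_adj.2 ⟨hne, h⟩))).2
  by_cases hQ : ∀ u, Q u
  · refine .inl ⟨fun u v h ↦ ?_, fun u v h ↦ ?_⟩ <;> obtain rfl | hne := eq_or_ne u v <;> try rfl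
    · exact (hQ u v (rookGraph_adj.2 ⟨hne, .inl h⟩)).1 h
    · have h₁ : u.1 ≠ v.1 := fun h₁ ↦ hne (Prod.ext h₁ h)
      have := (hQ u v (rookGraph_adj.2 ⟨hne, .inr h⟩)).not.1 h₁
      exact (himage hne (.inr h)).resolve_left this
  · obtain ⟨u₀, hu₀⟩ := not_forall.1 hQ
    have hflip {u v} (huv : (rookGraph α β).Adj u v) : ¬(u.1 = v.1 ↔ (φ u).1 = (φ v).1) :=
      fun h ↦ hu₀ ((hQ_const u₀ u).2 ((hQ_iff huv).2 h))
    refine .inr ⟨fun u v h ↦ ?_, fun u v h ↦ ?_⟩ <;> obtain rfl | hne := eq_or_ne u v <;> try rfl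
    · have := hflip (rookGraph_adj.2 ⟨hne, .inl h⟩)
      exact (himage hne (.inl h)).resolve_left (by tauto)
    · have h₁ : u.1 ≠ v.1 := fun h₁ ↦ hne (Prod.ext h₁ h)
      have := hflip (rookGraph_adj.2 ⟨hne, .inr h⟩)
      tauto

theorem rookGraph_eq_prodMap_or_swap [Nonempty α] [Nonempty β] :
    (∃ (σ : α → α) (τ : β → β), ⇑φ = Prod.map σ τ) ∨
      ∃ (c : β → α) (s : α → β), ⇑φ = fun p ↦ (c p.2, s p.1) := by
  obtain ⟨a₀⟩ := ‹Nonempty α›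
  obtain ⟨b₀⟩ := ‹Nonempty β›
  rcases φ.rookGraph_lines_preserved_or_swapped with ⟨h₁, h₂⟩ | ⟨h₁, h₂⟩
  · refine .inl ⟨fun a ↦ (φ (a, b₀)).1, fun b ↦ (φ (a₀, b)).2, funext fun p ↦ ?_⟩
    exact Prod.ext (h₁ p (p.1, b₀) rfl) (h₂ p (a₀, p.2) rfl)
  · refine .inr ⟨fun b ↦ (φ (a₀, b)).1, fun a ↦ (φ (a, b₀)).2, funext fun p ↦ ?_⟩
    exact Prod.ext (h₂ p (a₀, p.2) rfl) (h₁ p (p.1, b₀) rfl)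

end Iso
end SimpleGraph

theorem card_mul_card_le_card_add_card_of_iterate_swap {α β : Type*} [Fintype α] [Fintype β]
    (c : β → α) (s : α → β)
    (h : ∀ v w, ∃ k, (fun p : α × β ↦ (c p.2, s p.1))^[k] v = w) :
    Fintype.card α * Fintype.card β ≤ Fintype.card α + Fintype.card β := by
  classical
  set S : Set (α × β) := Set.range (fun a ↦ (a, s a)) ∪ Set.range (fun b ↦ (c b, b))
  have hS : Set.MapsTo (fun p : α × β ↦ (c p.2, s p.1)) S S := by
    rintro _ (⟨a, rfl⟩ | ⟨b, rfl⟩)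
    · exact .inr ⟨s a, rfl⟩
    · exact .inl ⟨c b, rfl⟩
  have hS_univ : ∀ w, w ∈ S := fun w ↦ by
    obtain ⟨k, hk⟩ := h (w.1, s w.1) w
    exact hk ▸ hS.iterate k (.inl ⟨w.1, rfl⟩)
  calc Fintype.card α * Fintype.card β = Fintype.card (α × β) := (Fintype.card_prod α β).symm
    _ ≤ (Finset.univ.image (fun a ↦ (a, s a)) ∪ Finset.univ.image (fun b ↦ (c b, b))).card := by
        refine Finset.card_le_card fun w _ ↦ ?_
        simpa [S] using hS_univ w
    _ ≤ Fintype.card α + Fintype.card β :=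
        (Finset.card_union_le _ _).trans (add_le_add Finset.card_image_le Finset.card_image_le)

theorem isCirculant_rookGraph_fin_of_coprime {m n : ℕ} [NeZero m] [NeZero n]
    (h : Nat.Coprime m n) : (rookGraph (Fin m) (Fin n)).IsCirculant := by
  rw [isCirculant_iff_exists_iterate]
  refine ⟨Iso.boxProd (Iso.completeGraph (Equiv.addRight 1))
    (Iso.completeGraph (Equiv.addRight 1)), fun v ↦ ?_⟩
  refine (minimalPeriod_eq_card_iff (Equiv.injective _) v).1 ?_
  refine (minimalPeriod_prodMap_eq_card_iff (· + 1) (· + 1) v).2 ?_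
  simpa using ⟨Fin.minimalPeriod_add_one m v.1, Fin.minimalPeriod_add_one n v.2, h⟩

theorem isCirculant_rookGraph_fin_two : (rookGraph (Fin 2) (Fin 2)).IsCirculant := by
  rw [isCirculant_iff_exists_iterate]
  let φ : rookGraph (Fin 2) (Fin 2) ≃g rookGraph (Fin 2) (Fin 2) :=
    (boxProdComm _ _).trans (Iso.boxProd Iso.refl (Iso.completeGraph (Equiv.addRight 1)))
  have hφ : ∀ v w, ∃ k : Fin 4, (⇑φ)^[k] v = w := by decide +revert
  exact ⟨φ, fun v w ↦ (hφ v w).elim fun k hk ↦ ⟨k, hk⟩⟩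

theorem stmt_10 (m n : ℕ) (hm : 1 ≤ m) (hn : 1 ≤ n) :
    ((completeGraph (Fin m)) □ (completeGraph (Fin n))).IsCirculant ↔
      Nat.Coprime m n ∨ (m = 2 ∧ n = 2) := by
  have : NeZero m := ⟨by omega⟩
  have : NeZero n := ⟨by omega⟩
  refine ⟨fun h ↦ ?_, ?_⟩
  · obtain ⟨φ, hφ⟩ := isCirculant_iff_exists_iterate.1 h
    rcases φ.rookGraph_eq_prodMap_or_swap with ⟨σ, τ, hστ⟩ | ⟨c, s, hcs⟩
    · have h := (minimalPeriod_eq_card_iff φ.injective (0, 0)).2 (hφ (0, 0))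
      rw [hστ, minimalPeriod_prodMap_eq_card_iff] at h
      exact .inl (by simpa using h.2.2)
    · have h := card_mul_card_le_card_add_card_of_iterate_swap c s (hcs ▸ hφ)
      simp only [Fintype.card_fin] at h
      rcases Nat.lt_or_ge m 2 with hm1 | hm2
      · exact .inl (by simp [show m = 1 by omega])
      rcases Nat.lt_or_ge n 2 with hn1 | hn2
      · exact .inl (by simp [show n = 1 by omega])
      exact .inr ⟨by nlinarith, by nlinarith⟩
  · rintro (hmn | ⟨rfl, rfl⟩)
    · exact isCirculant_rookGraph_fin_of_coprime hmn
    · exact isCirculant_rookGraph_fin_two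
end

section
/- If G is a circulant graph with an odd number of vertices, then K_{n,n} ⊗ G is circulant. -/
open SimpleGraph

/-!
Label the vertices of a circulant graph on `m` vertices along the orbit of a transitive cyclic
automorphism: this identifies it with a translation-invariant graph on `ZMod m`. For odd `m` the
Chinese remainder theorem gives `ZMod (2 * m) ≃ ZMod 2 × ZMod m`, so `K₂ ⊗ G` is translation
invariant on a cyclic group of order `2m`. Finally `K_{n,n} ⊗ G` is `K₂ ⊗ G` with every vertex
replaced by `n` independent copies, which is the pullback of `K₂ ⊗ G` along the reduction
`ZMod (2 * m * n) → ZMod (2 * m)`: its fibres all have `n` elements, and pulling back along a group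
homomorphism preserves translation invariance.
-/

lemma AddMonoidHom.card_fiber_mul_card {A B : Type*} [AddGroup A] [AddGroup B] (f : A →+ B)
    (hf : Function.Surjective f) (b : B) :
    Nat.card {a // f a = b} * Nat.card B = Nat.card A := by
  obtain ⟨a₀, rfl⟩ := hf b
  have : {a // f a = f a₀} ≃ f.ker :=
    Equiv.subtypeEquiv (Equiv.subRight a₀) (by simp [sub_eq_zero])
  rw [Nat.card_congr this, ← f.ker.card_mul_index, AddSubgroup.index_ker,
    AddMonoidHom.range_eq_top.2 hf, AddSubgroup.card_top]

lemma Nat.card_fiber_prodMap {α β γ δ : Type*} (f : α → γ) (g : β → δ) (c : γ) (d : δ) :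
    Nat.card {p // Prod.map f g p = (c, d)} =
      Nat.card {a // f a = c} * Nat.card {b // g b = d} := by
  rw [← Nat.card_prod]
  exact Nat.card_congr
    ((Equiv.subtypeEquivRight (by simp [Prod.ext_iff])).trans Equiv.subtypeProdEquivProd)

lemma Nat.card_fiber_sumElim_zero_one {α : Type*} (i : ZMod 2) :
    Nat.card {s : α ⊕ α // Sum.elim (0 : α → ZMod 2) 1 s = i} = Nat.card α := by
  obtain rfl | rfl : i = 0 ∨ i = 1 := by revert i; decide
  · exact Nat.card_congr
      ((Equiv.subtypeEquivRight (by rintro (a | a) <;> simp)).trans (Equiv.Set.rangeInl α α))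
  · exact Nat.card_congr
      ((Equiv.subtypeEquivRight (by rintro (a | a) <;> simp)).trans (Equiv.Set.rangeInr α α))

namespace SimpleGraph

variable {U V W : Type*}

@[simp]
lemma tensor_adj {G : SimpleGraph V} {H : SimpleGraph W} {x y : V × W} :
    (G.tensor H).Adj x y ↔ G.Adj x.1 y.1 ∧ H.Adj x.2 y.2 :=
  Iff.rfl

def Iso.tensor {V' W' : Type*} {G : SimpleGraph V} {G' : SimpleGraph V'} {H : SimpleGraph W}
    {H' : SimpleGraph W'} (e : G ≃g G') (e' : H ≃g H') : G.tensor H ≃g G'.tensor H' :=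
  ⟨e.toEquiv.prodCongr e'.toEquiv, by simp [Iso.map_adj_iff]⟩

lemma completeBipartiteGraph_tensor_eq_comap (α : Type*) (G : SimpleGraph V) :
    (completeBipartiteGraph α α).tensor G =
      ((⊤ : SimpleGraph (ZMod 2)).tensor G).comap (Prod.map (Sum.elim 0 1) id) := by
  ext ⟨a | a, v⟩ ⟨b | b, w⟩ <;> simp

lemma nonempty_comap_iso_of_card_fiber [Finite U] [Finite W] (G : SimpleGraph V)
    {f : U → V} {g : W → V} (h : ∀ v, Nat.card {u // f u = v} = Nat.card {w // g w = v}) :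
    Nonempty (G.comap f ≃g G.comap g) :=
  let e := Equiv.ofFiberEquiv fun v => (Finite.card_eq.1 (h v)).some
  ⟨⟨e, fun {a b} => by simp only [comap_adj, e, Equiv.ofFiberEquiv_map]⟩⟩

def IsAddInvariant [Add V] (G : SimpleGraph V) : Prop :=
  ∀ u v d : V, G.Adj (u + d) (v + d) ↔ G.Adj u v

lemma isAddInvariant_top [Add V] [IsRightCancelAdd V] : (⊤ : SimpleGraph V).IsAddInvariant := by
  intro u v d
  simp

lemma IsAddInvariant.tensor [Add V] [Add W] {G : SimpleGraph V} {H : SimpleGraph W}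
    (hG : G.IsAddInvariant) (hH : H.IsAddInvariant) : (G.tensor H).IsAddInvariant :=
  fun u v d => and_congr (hG u.1 v.1 d.1) (hH u.2 v.2 d.2)

lemma IsAddInvariant.comap {F : Type*} [Add U] [Add V] [FunLike F U V] [AddHomClass F U V]
    {G : SimpleGraph V} (hG : G.IsAddInvariant) (f : F) : (G.comap f).IsAddInvariant := by
  intro u v d
  simp only [comap_adj, map_add]
  exact hG _ _ _

lemma isAddInvariant_of_add_one {N : ℕ} [NeZero N] {G : SimpleGraph (ZMod N)}
    (h : ∀ u v, G.Adj (u + 1) (v + 1) ↔ G.Adj u v) : G.IsAddInvariant := by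
  suffices ∀ (k : ℕ) u v, G.Adj (u + k) (v + k) ↔ G.Adj u v by
    intro u v d
    simpa using this d.val u v
  intro k
  induction k with
  | zero => simp
  | succ k ih => intro u v; rw [Nat.cast_succ, ← add_assoc, ← add_assoc, h, ih]

lemma IsAddInvariant.isCirculant {N : ℕ} [NeZero N] {G : SimpleGraph (ZMod N)}
    (hG : G.IsAddInvariant) : G.IsCirculant := by
  refine ⟨⟨Equiv.addRight 1, hG _ _ 1⟩, fun u v => ⟨(v - u).val, ?_⟩⟩
  simp

lemma IsCirculant.of_iso {G : SimpleGraph V} {H : SimpleGraph W} (e : G ≃g H)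
    (hG : G.IsCirculant) : H.IsCirculant := by
  obtain ⟨φ, hφ⟩ := hG
  refine ⟨e.symm.trans (φ.trans e), fun v w => ?_⟩
  obtain ⟨k, hk⟩ := hφ (e.symm v) (e.symm w)
  refine ⟨k, ?_⟩
  have : (e.symm.trans (φ.trans e)).toEquiv = e.toEquiv.permCongrHom φ.toEquiv := rfl
  rw [this, ← map_pow, Equiv.permCongrHom_coe, Equiv.permCongr_apply]
  exact (congrArg e hk).trans (e.apply_symm_apply w)

lemma isCirculant_of_isEmpty [IsEmpty V] (G : SimpleGraph V) : G.IsCirculant :=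
  ⟨Iso.refl, fun v => isEmptyElim v⟩

lemma IsCirculant.exists_addInvariant_iso [Finite V] [Nonempty V] {G : SimpleGraph V}
    (hG : G.IsCirculant) :
    ∃ H : SimpleGraph (ZMod (Nat.card V)), H.IsAddInvariant ∧ Nonempty (H ≃g G) := by
  obtain ⟨φ, hφ⟩ := hG
  obtain ⟨v₀⟩ := ‹Nonempty V›
  set σ : Equiv.Perm V := φ.toEquiv
  have horbit : ∀ v, v ∈ MulAction.orbit (Subgroup.zpowers σ) v₀ := fun v =>
    have ⟨k, hk⟩ := hφ v₀ v
    ⟨⟨σ ^ k, Subgroup.npow_mem_zpowers σ k⟩, hk⟩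
  let e := (MulAction.orbitZPowersEquiv σ v₀).symm.trans (Equiv.subtypeUnivEquiv horbit)
  have he_intCast : ∀ k : ℤ, e k = (σ ^ k) v₀ := fun k => by
    change ((MulAction.orbitZPowersEquiv σ v₀).symm k : V) = _
    rw [MulAction.orbitZPowersEquiv_symm_apply']
    rfl
  have he_add_one : ∀ a, e (a + 1) = σ (e a) := fun a => by
    obtain ⟨k, rfl⟩ := ZMod.intCast_surjective a
    rw [← Int.cast_one, ← Int.cast_add, he_intCast, he_intCast, add_comm, zpow_add, zpow_one,
      Equiv.Perm.mul_apply]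
  have hcard : Nat.card V = Function.minimalPeriod (σ • ·) v₀ := by
    simpa using (Nat.card_congr e).symm
  rw [hcard]
  refine ⟨G.comap e, isAddInvariant_of_add_one fun u v => ?_, ⟨Iso.comap e G⟩⟩
  simp only [comap_adj, he_add_one]
  exact φ.map_rel_iff

lemma IsAddInvariant.isCirculant_completeBipartiteGraph_tensor {m n : ℕ} [NeZero n] (hm : Odd m)
    {H : SimpleGraph (ZMod m)} (hH : H.IsAddInvariant) :
    ((completeBipartiteGraph (Fin n) (Fin n)).tensor H).IsCirculant := by
  have : NeZero m := ⟨hm.pos.ne'⟩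
  have hcop : Nat.Coprime 2 m := Nat.coprime_two_left.2 hm
  let f : ZMod (2 * m * n) →+* ZMod 2 × ZMod m :=
    (ZMod.chineseRemainder hcop).toRingHom.comp (ZMod.castHom (dvd_mul_right _ n) _)
  have hf : Function.Surjective f :=
    (ZMod.chineseRemainder hcop).surjective.comp (ZMod.ringHom_surjective _)
  let g : (Fin n ⊕ Fin n) × ZMod m → ZMod 2 × ZMod m := Prod.map (Sum.elim 0 1) id
  have hfiber : ∀ b, Nat.card {a // f a = b} = Nat.card {p // g p = b} := by
    rintro ⟨i, x⟩
    have hf_fiber := (f : ZMod (2 * m * n) →+ ZMod 2 × ZMod m).card_fiber_mul_card hf (i, x)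
    rw [Nat.card_prod, Nat.card_zmod, Nat.card_zmod, Nat.card_zmod] at hf_fiber
    rw [Nat.card_fiber_prodMap, Nat.card_fiber_sumElim_zero_one, Nat.card_fin]
    simp only [id, Nat.card_unique, mul_one]
    exact Nat.eq_of_mul_eq_mul_right (Nat.mul_pos two_pos hm.pos) (hf_fiber.trans (mul_comm _ n))
  obtain ⟨e⟩ := nonempty_comap_iso_of_card_fiber ((⊤ : SimpleGraph (ZMod 2)).tensor H) hfiber
  rw [completeBipartiteGraph_tensor_eq_comap]
  exact ((isAddInvariant_top.tensor hH).comap f).isCirculant.of_iso e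

end SimpleGraph

theorem stmt_16 {V : Type*} [Fintype V] (n : ℕ) (G : SimpleGraph V)
    (hodd : Odd (Fintype.card V)) (hG : G.IsCirculant) :
    ((completeBipartiteGraph (Fin n) (Fin n)).tensor G).IsCirculant := by
  rcases eq_or_ne n 0 with rfl | hn
  · exact isCirculant_of_isEmpty _
  have : NeZero n := ⟨hn⟩
  have : Nonempty V := Fintype.card_pos_iff.1 hodd.pos
  rw [← Nat.card_eq_fintype_card] at hodd
  obtain ⟨H, hH, ⟨e⟩⟩ := hG.exists_addInvariant_iso
  exact (hH.isCirculant_completeBipartiteGraph_tensor hodd).of_iso (Iso.refl.tensor e)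
end
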